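/- arXiv:1404.4093 — 2 statements merged into one kernel-verified Lean document; each statement's English description precedes it below -/
import Mathlib

section
/- Continuity of the Kalman gain: if R > 0 and P, Q ≥ 0, then for K(Q) = Q H*(H Q H* + R)^{-1}, one has |K(Q) − K(P)| ≤ |Q−P| |H| |R^{-1}| (1 + min{|P|,|Q|} |H|² |R^{-1}|). -/
open ContinuousLinearMap RealInnerProductSpace

variable {V W : Type*} [NormedAddCommGroup V] [InnerProductSpace ℝ V] [CompleteSpace V]
  [NormedAddCommGroup W] [InnerProductSpace ℝ W] [CompleteSpace W]

/-- The Kalman gain operator `K(Q) = Q H* (H Q H* + R)⁻¹`. -/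
noncomputable def kalmanGain (H : V →L[ℝ] W) (R : W →L[ℝ] W) (Q : V →L[ℝ] V) : W →L[ℝ] V :=
  (Q ∘L ContinuousLinearMap.adjoint H) ∘L
    Ring.inverse (H ∘L Q ∘L ContinuousLinearMap.adjoint H + R)

/-!
With `S(Q) = H Q H* + R`, the difference of gains splits as
`K(Q) - K(P) = (Q - P) H* S(Q)⁻¹ + P H* (S(Q)⁻¹ - S(P)⁻¹)`, and the resolvent identity
`S(Q)⁻¹ - S(P)⁻¹ = S(Q)⁻¹ H (P - Q) H* S(P)⁻¹` gives the bound with `‖P‖`; exchanging `P` and `Q`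
gives the one with `‖Q‖`. Both inverses are bounded by `‖R⁻¹‖` because `S(Q) ≥ R > 0`: for a
positive invertible `A`, Cauchy–Schwarz for the form `⟪A x, y⟫` gives `‖u‖² ≤ ‖A⁻¹‖ ⟪A u, u⟫`,
and this lower bound passes to every `B ≥ A`.
-/

namespace ContinuousLinearMap

variable {E : Type*} [NormedAddCommGroup E] [InnerProductSpace ℝ E]

lemma inner_apply_self_le_of_le {A B : E →L[ℝ] E} (hAB : A ≤ B) (u : E) :
    ⟪A u, u⟫ ≤ ⟪B u, u⟫ := by
  have := ((le_def A B).mp hAB).inner_nonneg_left u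
  rwa [sub_apply, inner_sub_left, sub_nonneg] at this

lemma isUnit_of_coercive [CompleteSpace E] {A : E →L[ℝ] E} {α : ℝ} (hα : 0 < α)
    (h : ∀ u, α * ‖u‖ ^ 2 ≤ ⟪A u, u⟫) : IsUnit A :=
  isUnit_of_forall_le_norm_inner_map A (c := ⟨α, hα.le⟩) hα fun u =>
    calc ‖u‖ ^ 2 * α ≤ ⟪A u, u⟫ := by rw [mul_comm]; exact h u
      _ ≤ ‖⟪A u, u⟫‖ := Real.le_norm_self _

-- Cauchy–Schwarz for the form `⟪A x, y⟫` at `x = A⁻¹ u`, `y = u`.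
lemma IsPositive.sq_norm_le_norm_inverse_mul_inner {A : E →L[ℝ] E} (hA : A.IsPositive)
    (hAu : IsUnit A) (u : E) : ‖u‖ ^ 2 ≤ ‖(Ring.inverse A : E →L[ℝ] E)‖ * ⟪A u, u⟫ := by
  set A' : E →L[ℝ] E := Ring.inverse A
  have hAA' : A (A' u) = u := congr($(Ring.mul_inverse_cancel A hAu) u)
  have hcs := LinearMap.BilinForm.apply_mul_apply_le_of_forall_zero_le
    (innerₗ E ∘ₗ (A : E →ₗ[ℝ] E)) hA.inner_nonneg_left (A' u) u
  simp only [LinearMap.comp_apply, coe_coe, innerₗ_apply_apply, hAA',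
    hA.inner_left_eq_inner_right u, real_inner_self_eq_norm_sq] at hcs
  have hA'u : ⟪u, A' u⟫ ≤ ‖A'‖ * ‖u‖ ^ 2 :=
    calc ⟪u, A' u⟫ ≤ ‖u‖ * ‖A' u‖ := real_inner_le_norm _ _
      _ ≤ ‖u‖ * (‖A'‖ * ‖u‖) := by gcongr; exact A'.le_opNorm u
      _ = ‖A'‖ * ‖u‖ ^ 2 := by ring
  rw [← hA.inner_left_eq_inner_right] at hcs
  rcases (sq_nonneg ‖u‖).eq_or_lt with hu | hu
  · rw [← hu]
    exact mul_nonneg (norm_nonneg _) (hA.inner_nonneg_left u)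
  · refine le_of_mul_le_mul_left ?_ hu
    calc ‖u‖ ^ 2 * ‖u‖ ^ 2 ≤ ⟪u, A' u⟫ * ⟪A u, u⟫ := hcs
      _ ≤ ‖A'‖ * ‖u‖ ^ 2 * ⟪A u, u⟫ := by gcongr; exact hA.inner_nonneg_left u
      _ = ‖u‖ ^ 2 * (‖A'‖ * ⟪A u, u⟫) := by ring

lemma norm_inverse_le_of_le {A B : E →L[ℝ] E} (hA : A.IsPositive) (hAu : IsUnit A)
    (hBu : IsUnit B) (hAB : A ≤ B) :
    ‖(Ring.inverse B : E →L[ℝ] E)‖ ≤ ‖(Ring.inverse A : E →L[ℝ] E)‖ := by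
  refine opNorm_le_bound _ (norm_nonneg _) fun v => ?_
  set u := (Ring.inverse B : E →L[ℝ] E) v
  have hBu : B u = v := congr($(Ring.mul_inverse_cancel B hBu) v)
  have key : ‖u‖ * ‖u‖ ≤ ‖(Ring.inverse A : E →L[ℝ] E)‖ * ‖v‖ * ‖u‖ :=
    calc ‖u‖ * ‖u‖ = ‖u‖ ^ 2 := by ring
      _ ≤ ‖(Ring.inverse A : E →L[ℝ] E)‖ * ⟪A u, u⟫ := hA.sq_norm_le_norm_inverse_mul_inner hAu u
      _ ≤ ‖(Ring.inverse A : E →L[ℝ] E)‖ * ⟪B u, u⟫ := by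
        gcongr; exact inner_apply_self_le_of_le hAB u
      _ ≤ ‖(Ring.inverse A : E →L[ℝ] E)‖ * (‖B u‖ * ‖u‖) := by
        gcongr; exact real_inner_le_norm _ _
      _ = ‖(Ring.inverse A : E →L[ℝ] E)‖ * ‖v‖ * ‖u‖ := by rw [hBu]; ring
  rcases (norm_nonneg u).eq_or_lt with hu | hu
  · rw [← hu]; positivity
  · exact le_of_mul_le_mul_right key hu

end ContinuousLinearMap

section KalmanGain

variable (H : V →L[ℝ] W) (R : W →L[ℝ] W)

noncomputable def innovationCov (Q : V →L[ℝ] V) : W →L[ℝ] W := H ∘L Q ∘L adjoint H + R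

lemma le_innovationCov {Q : V →L[ℝ] V} (hQ : Q.IsPositive) : R ≤ innovationCov H R Q := by
  rw [le_def, innovationCov, add_sub_cancel_right]
  exact hQ.conj_adjoint H

lemma kalmanGain_sub_kalmanGain {P Q : V →L[ℝ] V} (hSP : IsUnit (innovationCov H R P))
    (hSQ : IsUnit (innovationCov H R Q)) :
    kalmanGain H R Q - kalmanGain H R P =
      (Q - P) ∘L adjoint H ∘L Ring.inverse (innovationCov H R Q) +
        P ∘L adjoint H ∘L Ring.inverse (innovationCov H R Q) ∘L
          H ∘L (P - Q) ∘L adjoint H ∘L Ring.inverse (innovationCov H R P) := by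
  have hdiff : innovationCov H R P - innovationCov H R Q = H ∘L (P - Q) ∘L adjoint H := by
    simp only [innovationCov, comp_sub, sub_comp, add_sub_add_right_eq_sub]
  have hinv := Ring.inverse_sub_inverse (iff_of_true hSQ hSP)
  rw [hdiff] at hinv
  have : Ring.inverse (innovationCov H R Q) ∘L H ∘L (P - Q) ∘L adjoint H ∘L
      Ring.inverse (innovationCov H R P) =
      Ring.inverse (innovationCov H R Q) - Ring.inverse (innovationCov H R P) := by
    rw [hinv]; rfl
  rw [this, kalmanGain, kalmanGain]
  simp only [innovationCov, comp_sub, sub_comp, comp_assoc]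
  abel

lemma norm_kalmanGain_sub_le {P Q : V →L[ℝ] V} (hSP : IsUnit (innovationCov H R P))
    (hSQ : IsUnit (innovationCov H R Q)) {r : ℝ}
    (hrP : ‖(Ring.inverse (innovationCov H R P) : W →L[ℝ] W)‖ ≤ r)
    (hrQ : ‖(Ring.inverse (innovationCov H R Q) : W →L[ℝ] W)‖ ≤ r) :
    ‖kalmanGain H R Q - kalmanGain H R P‖ ≤ ‖Q - P‖ * ‖H‖ * r * (1 + ‖P‖ * ‖H‖ ^ 2 * r) := by
  have hH : ‖adjoint H‖ = ‖H‖ := adjoint.norm_map H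
  have hr : 0 ≤ r := (norm_nonneg _).trans hrP
  rw [kalmanGain_sub_kalmanGain H R hSP hSQ]
  grw [norm_add_le, opNorm_comp_le, opNorm_comp_le, opNorm_comp_le, opNorm_comp_le, opNorm_comp_le,
    opNorm_comp_le, opNorm_comp_le, opNorm_comp_le, hH, hrP, hrQ, norm_sub_rev P Q]
  exact (by ring : _ = _).le

end KalmanGain

/-- Continuity of the Kalman gain: if `R > 0` and `P, Q ≥ 0`, then
`|K(Q) − K(P)| ≤ |Q−P| |H| |R⁻¹| (1 + min{|P|,|Q|} |H|² |R⁻¹|)`. -/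
theorem kalmanGain_continuity
    (H : V →L[ℝ] W) (R : W →L[ℝ] W) (P Q : V →L[ℝ] V)
    (hP : P.IsPositive) (hQ : Q.IsPositive) (hRsym : IsSelfAdjoint R)
    (hRpos : ∃ α : ℝ, 0 < α ∧ ∀ u : W, α * ‖u‖ ^ 2 ≤ ⟪R u, u⟫) :
    ‖kalmanGain H R Q - kalmanGain H R P‖
      ≤ ‖Q - P‖ * ‖H‖ * ‖(Ring.inverse R : W →L[ℝ] W)‖ *
        (1 + min ‖P‖ ‖Q‖ * ‖H‖ ^ 2 * ‖(Ring.inverse R : W →L[ℝ] W)‖) := by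
  obtain ⟨α, hα, hRcoercive⟩ := hRpos
  have hR : R.IsPositive :=
    (isPositive_iff' R).mpr
      ⟨hRsym, fun u => (by positivity : (0 : ℝ) ≤ α * ‖u‖ ^ 2).trans (hRcoercive u)⟩
  have hSunit {X : V →L[ℝ] V} (hX : X.IsPositive) : IsUnit (innovationCov H R X) :=
    isUnit_of_coercive hα fun u =>
      (hRcoercive u).trans (inner_apply_self_le_of_le (le_innovationCov H R hX) u)
  have hSinv {X : V →L[ℝ] V} (hX : X.IsPositive) :
      ‖(Ring.inverse (innovationCov H R X) : W →L[ℝ] W)‖ ≤ ‖(Ring.inverse R : W →L[ℝ] W)‖ :=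
    norm_inverse_le_of_le hR (isUnit_of_coercive hα hRcoercive) (hSunit hX)
      (le_innovationCov H R hX)
  rcases min_cases ‖P‖ ‖Q‖ with ⟨hmin, -⟩ | ⟨hmin, -⟩
  · rw [hmin]
    exact norm_kalmanGain_sub_le H R (hSunit hP) (hSunit hQ) (hSinv hP) (hSinv hQ)
  · rw [hmin, norm_sub_rev, norm_sub_rev Q]
    exact norm_kalmanGain_sub_le H R (hSunit hQ) (hSunit hP) (hSinv hQ) (hSinv hP)
end

section
/- Bound on the Kalman gain: if R > 0 and Q ≥ 0, then |K(Q)| ≤ |Q| |H| |R^{-1}|, where K(Q) = Q H*(H Q H* + R)^{-1}. -/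
open ContinuousLinearMap RealInnerProductSpace

variable {V W : Type*} [NormedAddCommGroup V] [InnerProductSpace ℝ V] [CompleteSpace V]
  [NormedAddCommGroup W] [InnerProductSpace ℝ W] [CompleteSpace W]

/-!
Write `S = H Q H* + R`. Since `H Q H* ≥ 0`, `⟪R v, v⟫ ≤ ⟪S v, v⟫`, and Cauchy–Schwarz for the
positive form `⟪R ·, ·⟫` gives `‖v‖² ≤ ‖R⁻¹‖ ⟪R v, v⟫`. Hence `‖v‖² ≤ ‖R⁻¹‖ ⟪S v, v⟫ ≤ ‖R⁻¹‖ ‖S v‖ ‖v‖`,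
so `‖S⁻¹‖ ≤ ‖R⁻¹‖`, and `‖K(Q)‖ ≤ ‖Q‖ ‖H*‖ ‖S⁻¹‖ ≤ ‖Q‖ ‖H‖ ‖R⁻¹‖`.
-/

namespace ContinuousLinearMap

variable {E : Type*} [NormedAddCommGroup E] [InnerProductSpace ℝ E]

theorem IsPositive.inner_mul_inner_le {T : E →L[ℝ] E} (hT : T.IsPositive) (x y : E) :
    ⟪T x, y⟫ * ⟪T y, x⟫ ≤ ⟪T x, x⟫ * ⟪T y, y⟫ :=
  LinearMap.BilinForm.apply_mul_apply_le_of_forall_zero_le ((innerₗ E).comp T.toLinearMap)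
    hT.inner_nonneg_left x y

theorem IsPositive.norm_sq_le_norm_inverse_mul_inner {R : E →L[ℝ] E} (hR : R.IsPositive)
    (hRu : IsUnit R) (v : E) : ‖v‖ ^ 2 ≤ ‖Ring.inverse R‖ * ⟪R v, v⟫ := by
  obtain ⟨U, rfl⟩ := hRu
  rw [Ring.inverse_unit]
  set w := (↑U⁻¹ : E →L[ℝ] E) v
  have hUw : (U : E →L[ℝ] E) w = v := DFunLike.congr_fun U.mul_inv _
  have hcs := hR.inner_mul_inner_le w v
  rw [hUw, hR.inner_left_eq_inner_right v, hUw, real_inner_self_eq_norm_sq] at hcs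
  have hw : ⟪v, w⟫ ≤ ‖(↑U⁻¹ : E →L[ℝ] E)‖ * ‖v‖ ^ 2 :=
    calc ⟪v, w⟫ ≤ ‖v‖ * ‖w‖ := real_inner_le_norm v w
      _ ≤ ‖v‖ * (‖(↑U⁻¹ : E →L[ℝ] E)‖ * ‖v‖) := by gcongr; exact le_opNorm _ v
      _ = ‖(↑U⁻¹ : E →L[ℝ] E)‖ * ‖v‖ ^ 2 := by ring
  rcases (sq_nonneg ‖v‖).eq_or_lt with hv | hv
  · rw [← hv]
    exact mul_nonneg (norm_nonneg _) (hR.inner_nonneg_left v)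
  · refine le_of_mul_le_mul_left ?_ hv
    linarith [mul_le_mul_of_nonneg_right hw (hR.inner_nonneg_left v)]

theorem norm_inverse_le_of_norm_sq_le_mul_inner {S : E →L[ℝ] E} (hS : IsUnit S) {c : ℝ}
    (hc : 0 ≤ c) (h : ∀ v, ‖v‖ ^ 2 ≤ c * ⟪S v, v⟫) : ‖Ring.inverse S‖ ≤ c := by
  obtain ⟨U, rfl⟩ := hS
  rw [Ring.inverse_unit]
  refine opNorm_le_bound _ hc fun u => ?_
  set v := (↑U⁻¹ : E →L[ℝ] E) u
  have hUv : (U : E →L[ℝ] E) v = u := DFunLike.congr_fun U.mul_inv _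
  have hv : ‖v‖ * ‖v‖ ≤ c * ‖u‖ * ‖v‖ :=
    calc ‖v‖ * ‖v‖ = ‖v‖ ^ 2 := (sq _).symm
      _ ≤ c * ⟪u, v⟫ := hUv ▸ h v
      _ ≤ c * (‖u‖ * ‖v‖) := by gcongr; exact real_inner_le_norm u v
      _ = c * ‖u‖ * ‖v‖ := by ring
  rcases (norm_nonneg v).eq_or_lt with hv0 | hv0
  · rw [← hv0]; positivity
  · exact le_of_mul_le_mul_right hv hv0

theorem isUnit_of_forall_mul_norm_sq_le_inner [CompleteSpace E] {T : E →L[ℝ] E} {α : ℝ}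
    (hα : 0 < α) (h : ∀ u, α * ‖u‖ ^ 2 ≤ ⟪T u, u⟫) : IsUnit T :=
  isUnit_of_forall_le_norm_inner_map T (c := ⟨α, hα.le⟩) hα fun u =>
    (mul_comm _ α).trans_le <| (h u).trans (le_abs_self _)

theorem norm_inverse_add_le [CompleteSpace E] {P R : E →L[ℝ] E} (hP : P.IsPositive)
    (hR : R.IsPositive) {α : ℝ} (hα : 0 < α) (hRα : ∀ u, α * ‖u‖ ^ 2 ≤ ⟪R u, u⟫) :
    ‖Ring.inverse (P + R)‖ ≤ ‖Ring.inverse R‖ := by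
  have hRS : ∀ u, ⟪R u, u⟫ ≤ ⟪(P + R) u, u⟫ := fun u => by
    simpa [inner_add_left] using hP.inner_nonneg_left u
  have hRu := isUnit_of_forall_mul_norm_sq_le_inner hα hRα
  have hSu := isUnit_of_forall_mul_norm_sq_le_inner hα fun u => (hRα u).trans (hRS u)
  exact norm_inverse_le_of_norm_sq_le_mul_inner hSu (norm_nonneg _) fun v =>
    (hR.norm_sq_le_norm_inverse_mul_inner hRu v).trans
      (mul_le_mul_of_nonneg_left (hRS v) (norm_nonneg _))

end ContinuousLinearMap

/-- Bound on the Kalman gain: if `R > 0` and `Q ≥ 0`, then `|K(Q)| ≤ |Q| |H| |R⁻¹|`. -/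
theorem kalmanGain_bound
    (H : V →L[ℝ] W) (R : W →L[ℝ] W) (Q : V →L[ℝ] V)
    (hQ : Q.IsPositive) (hRsym : IsSelfAdjoint R)
    (hRpos : ∃ α : ℝ, 0 < α ∧ ∀ u : W, α * ‖u‖ ^ 2 ≤ ⟪R u, u⟫) :
    ‖kalmanGain H R Q‖ ≤ ‖Q‖ * ‖H‖ * ‖(Ring.inverse R : W →L[ℝ] W)‖ := by
  obtain ⟨α, hα, hRα⟩ := hRpos
  have hR : R.IsPositive :=
    isPositive_def'.mpr ⟨hRsym, fun u => (by positivity : 0 ≤ α * ‖u‖ ^ 2).trans (hRα u)⟩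
  calc ‖kalmanGain H R Q‖
      ≤ ‖Q ∘L adjoint H‖ * ‖Ring.inverse (H ∘L Q ∘L adjoint H + R)‖ := opNorm_comp_le _ _
    _ ≤ ‖Q‖ * ‖H‖ * ‖(Ring.inverse R : W →L[ℝ] W)‖ := by
      gcongr
      · exact (opNorm_comp_le _ _).trans_eq (by rw [LinearIsometryEquiv.norm_map])
      · exact norm_inverse_add_le (hQ.conj_adjoint H) hR hα hRα
end
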